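/- Let C be a regular, irreducible curve that is projective over a field k with H^0(C, O_C) = k, with function field F = k(C) and arithmetic genus t. Let D be a divisor on C of degree e ≥ 1, let n be the smallest integer such that n·e > 2t + e − 2, and set S̃ = |D| ∪ { P in C : H^0(C, O_C(nD − P)) ≠ {0} }. Then for every n' ≥ 3, the map K^M_{n'}(F) → ∐_{P ∉ S̃} K^M_{n'−1}(k(P)) induced by the tame symbol on Milnor K-theory is surjective. -/

import Mathlib

/-!
For a point `P` outside `S̃` let `μ ≥ n` be least with `L((μ+1)D - P) ≠ 0`, and let `h` be a
nonzero element of that space. The Riemann-Roch inequality together with `n e > 2t + e - 2`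
forces `h` to be a uniformizer at `P` and a unit at every other point outside `S̃`, and makes
evaluation `L(μD) → k(P)` injective with image of more than half the dimension of `k(P)`; so
every unit of `k(P)` is a quotient of two such values, and `K^M_m(k(P))` is generated by symbols
`{ū₁, …, ū_m}` with `uᵢ ∈ L(μD)`. The symbol `{u₁, …, u_m, h}` has boundary `{ū₁, …, ū_m}` at `P`,
and its other boundaries outside `S̃` sit at zeros `Q` of the `uᵢ`, where `L(μD - Q) ≠ 0`: such
`Q` have smaller `μ`, so these boundaries can be cancelled by induction on `μ`.
-/

open scoped TensorProduct

noncomputable section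

/-- The set of Steinberg relations in `Fˣ ⊗_ℤ Fˣ` (written additively):
the elements `a ⊗ b` with `a + b = 1` in `F`. -/
def SteinbergSet (F : Type*) [Field F] :
    Set (TensorProduct ℤ (Additive Fˣ) (Additive Fˣ)) :=
  { x | ∃ a b : Fˣ, (a : F) + (b : F) = 1 ∧
      x = Additive.ofMul a ⊗ₜ[ℤ] Additive.ofMul b }

/-- Milnor's `K₂` of a field, via Matsumoto's presentation. -/
abbrev K2 (F : Type*) [Field F] :=
  (TensorProduct ℤ (Additive Fˣ) (Additive Fˣ)) ⧸
    Submodule.span ℤ (SteinbergSet F)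

/-- The symbol `{f, g}` in `K₂(F)`. -/
def symbol {F : Type*} [Field F] (f g : Fˣ) : K2 F :=
  Submodule.Quotient.mk (Additive.ofMul f ⊗ₜ[ℤ] Additive.ofMul g)

/-- The degree of a divisor `D` on the curve: `∑_P deg(P) · D(P)`,
where `deg P = [k(P) : k]`. -/
def divDeg (k : Type*) [Field k] {Pt : Type*} (res : Pt → Type*)
    [∀ P, Field (res P)] [∀ P, Algebra k (res P)] (D : Pt →₀ ℤ) : ℤ :=
  ∑ᶠ P, (Module.finrank k (res P) : ℤ) * D P

/-- Axioms for a regular, irreducible curve `C`, projective over a field `k`, with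
`H⁰(C, O_C) = k`, presented through: its function field `F = k(C)`, its set `Pt` of
closed points, the residue fields `res P = k(P)`, the normalized valuations `ord P`,
the evaluation maps `ev P` (evaluation at `P` of functions regular at `P`), the
Riemann-Roch spaces `L D = H⁰(C, O_C(D))`, and the arithmetic genus
`t = dim_k H¹(C, O_C)`, characterized by the Riemann-Roch relations. -/
structure IsProjCurve (k F : Type*) [Field k] [Field F] [Algebra k F]
    {Pt : Type*} (res : Pt → Type*) [∀ P, Field (res P)] [∀ P, Algebra k (res P)]
    (ord : Pt → F → ℤ) (ev : ∀ P, F → res P)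
    (L : (Pt →₀ ℤ) → Submodule k F) (t : ℕ) : Prop where
  finiteDimensional_res : ∀ P, FiniteDimensional k (res P)
  ord_mul : ∀ P (f g : F), f ≠ 0 → g ≠ 0 → ord P (f * g) = ord P f + ord P g
  ord_add : ∀ P (f g : F), f ≠ 0 → g ≠ 0 → f + g ≠ 0 →
      min (ord P f) (ord P g) ≤ ord P (f + g)
  ord_algebraMap : ∀ P (c : k), c ≠ 0 → ord P (algebraMap k F c) = 0
  ord_uniformizer : ∀ P, ∃ f : F, f ≠ 0 ∧ ord P f = 1
  ord_separates : ∀ P Q, (∀ f : F, ord P f = ord Q f) → P = Q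
  support_finite : ∀ f : F, f ≠ 0 → {P | ord P f ≠ 0}.Finite
  degree_formula : ∀ f : F, f ≠ 0 →
      ∑ᶠ P, (Module.finrank k (res P) : ℤ) * ord P f = 0
  ev_zero : ∀ P, ev P 0 = 0
  ev_one : ∀ P, ev P 1 = 1
  ev_add : ∀ P (f g : F), f ≠ 0 → g ≠ 0 → 0 ≤ ord P f → 0 ≤ ord P g →
      ev P (f + g) = ev P f + ev P g
  ev_mul : ∀ P (f g : F), f ≠ 0 → g ≠ 0 → 0 ≤ ord P f → 0 ≤ ord P g →
      ev P (f * g) = ev P f * ev P g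
  ev_algebraMap : ∀ P (c : k), ev P (algebraMap k F c) = algebraMap k (res P) c
  ev_eq_zero_iff : ∀ P (f : F), f ≠ 0 → 0 ≤ ord P f → (ev P f = 0 ↔ 0 < ord P f)
  ev_surjective : ∀ P (y : res P), ∃ f : F, f ≠ 0 ∧ 0 ≤ ord P f ∧ ev P f = y
  mem_L : ∀ (D : Pt →₀ ℤ) (f : F), f ∈ L D ↔ (f ≠ 0 → ∀ P, 0 ≤ D P + ord P f)
  finiteDimensional_L : ∀ D, FiniteDimensional k (L D)
  global_sections : ∀ f : F, f ∈ L 0 ↔ ∃ c : k, algebraMap k F c = f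
  rr_ineq : ∀ D : Pt →₀ ℤ,
      divDeg k res D + 1 - t ≤ (Module.finrank k (L D) : ℤ)
  rr_eq : ∀ D : Pt →₀ ℤ, 2 * (t : ℤ) - 2 < divDeg k res D →
      (Module.finrank k (L D) : ℤ) = divDeg k res D + 1 - t

/-- `T` is the tame symbol `K₂(F) → ∐_{P} k(P)^*`: it is determined by
`T_P({f,g}) = (-1)^{ord_P(f)·ord_P(g)} (f^{ord_P(g)} / g^{ord_P(f)})(P)`. -/
def IsTameSymbol {F : Type*} [Field F] {Pt : Type*} {res : Pt → Type*}
    [∀ P, Field (res P)]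
    (ord : Pt → F → ℤ) (ev : ∀ P, F → res P)
    (T : K2 F →+ Π₀ P : Pt, Additive ((res P)ˣ)) : Prop :=
  ∀ (f g : Fˣ) (P : Pt),
    ((Additive.toMul (T (symbol f g) P) : (res P)ˣ) : res P) =
      ev P (((-1 : Fˣ) ^ (ord P (f : F) * ord P (g : F)) *
        f ^ (ord P (g : F)) * g ^ (-ord P (f : F)) : Fˣ) : F)

/-- The Steinberg relations in the `n`-fold tensor power of `Fˣ`. -/
def MilnorSteinberg (n : ℕ) (F : Type) [Field F] :
    Set (PiTensorProduct ℤ (fun _ : Fin n => Additive Fˣ)) :=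
  { x | ∃ (a : Fin n → Fˣ) (i j : Fin n), i ≠ j ∧ (a i : F) + (a j : F) = 1 ∧
      x = PiTensorProduct.tprod ℤ (fun i => Additive.ofMul (a i)) }

/-- Milnor K-theory `K^M_n(F)` of a field `F`, via its standard presentation. -/
def MilnorK (n : ℕ) (F : Type) [Field F] :=
  PiTensorProduct ℤ (fun _ : Fin n => Additive Fˣ) ⧸
    Submodule.span ℤ (MilnorSteinberg n F)

instance (n : ℕ) (F : Type) [Field F] : AddCommGroup (MilnorK n F) :=
  inferInstanceAs (AddCommGroup (PiTensorProduct ℤ (fun _ : Fin n => Additive Fˣ) ⧸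
    Submodule.span ℤ (MilnorSteinberg n F)))

/-- The Milnor symbol `{a 0, …, a (n-1)}` in `K^M_n(F)`. -/
def milnorSymbol {n : ℕ} {F : Type} [Field F] (a : Fin n → Fˣ) : MilnorK n F :=
  Submodule.Quotient.mk (PiTensorProduct.tprod ℤ (fun i => Additive.ofMul (a i)))

/-- `bd` is the tame symbol (boundary map) `K^M_{m+1}(F) → K^M_m(K)` associated to a
discrete valuation `v` on `F` with residue field `K` and reduction map `ev`: it is the
unique homomorphism killing symbols of units and sending `{u₁, …, u_m, π}` to
`{ū₁, …, ū_m}` for a uniformizer `π` and units `uᵢ`. -/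
def IsMilnorBoundary {F : Type} [Field F] {K : Type} [Field K] {m : ℕ}
    (v : F → ℤ) (ev : F → K)
    (bd : MilnorK (m + 1) F →+ MilnorK m K) : Prop :=
  (∀ a : Fin (m + 1) → Fˣ, (∀ i, v (a i) = 0) → bd (milnorSymbol a) = 0) ∧
  (∀ (u : Fin m → Fˣ) (π : Fˣ), v (π : F) = 1 → (∀ i, v (u i : F) = 0) →
    ∀ w : Fin m → Kˣ, (∀ i, (w i : K) = ev (u i : F)) →
      bd (milnorSymbol (Fin.snoc u π)) = milnorSymbol w)

section MilnorSymbols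

variable {K : Type} [Field K] {m : ℕ}

theorem milnorSymbol_update_mul (a : Fin m → Kˣ) (i : Fin m) (b c : Kˣ) :
    milnorSymbol (Function.update a i (b * c)) =
      milnorSymbol (Function.update a i b) + milnorSymbol (Function.update a i c) := by
  have hofMul (x : Kˣ) : (fun j => Additive.ofMul (Function.update a i x j)) =
      Function.update (fun j => Additive.ofMul (a j)) i (Additive.ofMul x) :=
    Function.comp_update Additive.ofMul a i x
  simp only [milnorSymbol, hofMul, ofMul_mul, MultilinearMap.map_update_add]
  rfl

theorem milnorSymbol_mem_closure {S : Set Kˣ} (hS : ∀ ρ : Kˣ, ∃ v ∈ S, ∃ w ∈ S, ρ = v * w⁻¹)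
    (a : Fin m → Kˣ) :
    milnorSymbol a ∈ AddSubgroup.closure (milnorSymbol '' Set.univ.pi fun _ => S) := by
  classical
  suffices h : ∀ s : Finset (Fin m), ∀ a : Fin m → Kˣ, (∀ i ∉ s, a i ∈ S) →
      milnorSymbol a ∈ AddSubgroup.closure (milnorSymbol '' Set.univ.pi fun _ => S) from
    h Finset.univ a (by simp)
  intro s
  induction s using Finset.induction_on with
  | empty => exact fun a ha => AddSubgroup.subset_closure ⟨a, fun i _ => ha i (by simp), rfl⟩
  | insert i s _ ih =>
    intro a ha
    obtain ⟨v, hv, w, hw, hvw⟩ := hS (a i)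
    have hsplit : milnorSymbol a =
        milnorSymbol (Function.update a i v) - milnorSymbol (Function.update a i w) := by
      conv_lhs => rw [← Function.update_eq_self i a]
      rw [eq_sub_iff_add_eq, ← milnorSymbol_update_mul, hvw, inv_mul_cancel_right]
    have hupdate {x : Kˣ} (hx : x ∈ S) : ∀ j ∉ s, Function.update a i x j ∈ S := by
      intro j hj
      by_cases hji : j = i
      · simpa [hji] using hx
      · simpa [hji] using ha j (by simp [hji, hj])
    rw [hsplit]
    exact sub_mem (ih _ (hupdate hv)) (ih _ (hupdate hw))

theorem closure_milnorSymbol_eq_top {S : Set Kˣ}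
    (hS : ∀ ρ : Kˣ, ∃ v ∈ S, ∃ w ∈ S, ρ = v * w⁻¹) :
    AddSubgroup.closure (milnorSymbol '' Set.univ.pi fun _ => S) =
      (⊤ : AddSubgroup (MilnorK m K)) := by
  rw [eq_top_iff]
  rintro ξ -
  obtain ⟨z, rfl⟩ := Submodule.Quotient.mk_surjective _ ξ
  induction z using PiTensorProduct.induction_on with
  | smul_tprod r f =>
    rw [Submodule.Quotient.mk_smul]
    exact zsmul_mem (milnorSymbol_mem_closure hS fun i => Additive.toMul (f i)) r
  | add x y hx hy =>
    rw [Submodule.Quotient.mk_add]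
    exact add_mem hx hy

end MilnorSymbols

section Boundaries

variable {F : Type} [Field F] {Pt : Type} {res : Pt → Type} [∀ P, Field (res P)] {m : ℕ}
  (bd : ∀ P, MilnorK (m + 1) F →+ MilnorK m (res P)) (G : Set Pt)

def isolatedBoundaries (P : Pt) : AddSubgroup (MilnorK m (res P)) :=
  (⨅ Q ∈ G, ⨅ _ : Q ≠ P, (bd Q).ker).map (bd P)

variable {bd G}

theorem mem_isolatedBoundaries {P : Pt} {ξ : MilnorK m (res P)} :
    ξ ∈ isolatedBoundaries bd G P ↔ ∃ x, (∀ Q ∈ G, Q ≠ P → bd Q x = 0) ∧ bd P x = ξ := by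
  simp [isolatedBoundaries, AddSubgroup.mem_map, AddSubgroup.mem_iInf]

theorem boundary_mem_isolatedBoundaries {P : Pt} (hP : P ∈ G) (x : MilnorK (m + 1) F)
    (hfin : {Q | Q ∈ G ∧ Q ≠ P ∧ bd Q x ≠ 0}.Finite)
    (hiso : ∀ Q ∈ G, Q ≠ P → bd Q x ≠ 0 → bd Q x ∈ isolatedBoundaries bd G Q) :
    bd P x ∈ isolatedBoundaries bd G P := by
  classical
  set B := hfin.toFinset
  have hcorr (Q : Pt) : ∃ y, Q ∈ B → (∀ Q' ∈ G, Q' ≠ Q → bd Q' y = 0) ∧ bd Q y = bd Q x := by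
    by_cases hQ : Q ∈ B
    · obtain ⟨hQG, hQP, hQx⟩ := hfin.mem_toFinset.1 hQ
      obtain ⟨y, hy⟩ := mem_isolatedBoundaries.1 (hiso Q hQG hQP hQx)
      exact ⟨y, fun _ => hy⟩
    · exact ⟨0, fun h => absurd h hQ⟩
  choose y hy using hcorr
  have hyB {Q Q' : Pt} (hQ : Q ∈ B) (hQ' : Q' ∈ G) (hne : Q ≠ Q') : bd Q' (y Q) = 0 :=
    (hy Q hQ).1 Q' hQ' (Ne.symm hne)
  refine mem_isolatedBoundaries.2 ⟨x - ∑ Q ∈ B, y Q, fun Q' hQ' hQ'P => ?_, ?_⟩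
  · rw [map_sub, map_sum]
    by_cases hQ'B : Q' ∈ B
    · rw [Finset.sum_eq_single_of_mem Q' hQ'B fun Q hQ hne => hyB hQ hQ' hne,
        (hy Q' hQ'B).2, sub_self]
    · have hx : bd Q' x = 0 := by
        by_contra hx
        exact hQ'B (hfin.mem_toFinset.2 ⟨hQ', hQ'P, hx⟩)
      rw [hx, Finset.sum_eq_zero fun Q hQ => hyB hQ hQ' (ne_of_mem_of_not_mem hQ hQ'B), sub_zero]
  · rw [map_sub, map_sum, Finset.sum_eq_zero fun Q hQ => hyB hQ hP (hfin.mem_toFinset.1 hQ).2.1,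
      sub_zero]

theorem exists_boundary_eq_of_isolatedBoundaries_eq_top
    (htop : ∀ P ∈ G, isolatedBoundaries bd G P = ⊤) (y : Π₀ P, MilnorK m (res P)) :
    ∃ x, ∀ P ∈ G, bd P x = y P := by
  classical
  induction y using DFinsupp.induction with
  | h0 => exact ⟨0, fun P _ => by simp⟩
  | ha i b f _ _ ih =>
    obtain ⟨x, hx⟩ := ih
    have hsingle : ∃ z, ∀ P ∈ G, bd P z = (DFinsupp.single i b : Π₀ P, MilnorK m (res P)) P := by
      by_cases hi : i ∈ G
      · obtain ⟨z, hz, hzi⟩ := mem_isolatedBoundaries.1 (htop i hi ▸ AddSubgroup.mem_top b)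
        refine ⟨z, fun P hP => ?_⟩
        by_cases hPi : P = i
        · subst hPi
          simp [hzi]
        · rw [hz P hP hPi, DFinsupp.single_eq_of_ne hPi]
      · refine ⟨0, fun P hP => ?_⟩
        rw [map_zero, DFinsupp.single_eq_of_ne (ne_of_mem_of_not_mem hP hi)]
    obtain ⟨z, hz⟩ := hsingle
    exact ⟨z + x, fun P hP => by simp [hz P hP, hx P hP]⟩

end Boundaries

theorem Submodule.exists_ne_zero_mul_mem_of_finrank_lt {k K : Type*} [Field k] [Field K]
    [Algebra k K] [FiniteDimensional k K] {V : Submodule k K}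
    (hV : Module.finrank k K < 2 * Module.finrank k V) {ρ : K} (hρ : ρ ≠ 0) :
    ∃ w ∈ V, w ≠ 0 ∧ ρ * w ∈ V := by
  set W := V.map (LinearMap.mulLeft k ρ)
  have hW : Module.finrank k W = Module.finrank k V :=
    LinearEquiv.finrank_eq (V.equivMapOfInjective _ (mul_right_injective₀ hρ)).symm
  have hsum := Submodule.finrank_sup_add_finrank_inf_eq W V
  have hsup := Submodule.finrank_le (W ⊔ V)
  obtain ⟨z, ⟨⟨w, hw, rfl⟩, hwV⟩, hz⟩ := (Submodule.ne_bot_iff (W ⊓ V)).1 fun hbot => by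
    rw [hbot, finrank_bot] at hsum
    omega
  exact ⟨w, hw, by rintro rfl; simp at hz, hwV⟩

section Divisors

variable {k : Type} [Field k] {Pt : Type} {res : Pt → Type} [∀ P, Field (res P)]
  [∀ P, Algebra k (res P)]

theorem divDeg_eq_linearCombination (D : Pt →₀ ℤ) :
    divDeg k res D =
      Finsupp.linearCombination ℤ (fun P => (Module.finrank k (res P) : ℤ)) D := by
  rw [divDeg, Finsupp.linearCombination_apply, Finsupp.sum,
    finsum_eq_sum_of_support_subset (s := D.support) _ fun P hP => ?_]
  · simp [mul_comm]
  · simpa using right_ne_zero_of_mul (Function.mem_support.1 hP)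

@[simp]
theorem divDeg_sub (D E : Pt →₀ ℤ) :
    divDeg k res (D - E) = divDeg k res D - divDeg k res E := by
  simp [divDeg_eq_linearCombination]

@[simp]
theorem divDeg_zsmul (z : ℤ) (D : Pt →₀ ℤ) : divDeg k res (z • D) = z * divDeg k res D := by
  simp [divDeg_eq_linearCombination]

@[simp]
theorem divDeg_single (P : Pt) (c : ℤ) :
    divDeg k res (Finsupp.single P c) = c * Module.finrank k (res P) := by
  simp [divDeg_eq_linearCombination]

end Divisors

/-- The complement of `S̃`. -/
def goodPoints {k F Pt : Type} [Field k] [Field F] [Algebra k F]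
    (L : (Pt →₀ ℤ) → Submodule k F) (D : Pt →₀ ℤ) (n : ℤ) : Set Pt :=
  {P | D P = 0 ∧ L (n • D - Finsupp.single P 1) = ⊥}

namespace IsProjCurve

variable {k F : Type} [Field k] [Field F] [Algebra k F]
  {Pt : Type} {res : Pt → Type} [∀ P, Field (res P)] [∀ P, Algebra k (res P)]
  {ord : Pt → F → ℤ} {ev : ∀ P, F → res P} {L : (Pt →₀ ℤ) → Submodule k F} {t : ℕ}
  {E : Pt →₀ ℤ} {P : Pt} {f : F}

theorem divDeg_nonneg_of_mem (hC : IsProjCurve k F res ord ev L t) (hf : f ∈ L E)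
    (hf0 : f ≠ 0) : 0 ≤ divDeg k res E := by
  have hsum : ∑ᶠ P, (Module.finrank k (res P) : ℤ) * (E P + ord P f) = divDeg k res E := by
    simp_rw [mul_add]
    rw [finsum_add_distrib (E.hasFiniteSupport.fun_mul_right _)
      (Function.HasFiniteSupport.fun_mul_right _ (hC.support_finite f hf0)),
      hC.degree_formula f hf0, add_zero, divDeg]
  rw [← hsum]
  exact finsum_nonneg fun P => mul_nonneg (Nat.cast_nonneg _) ((hC.mem_L E f).1 hf hf0 P)

theorem divDeg_add_one_le_of_L_eq_bot (hC : IsProjCurve k F res ord ev L t) (hE : L E = ⊥) :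
    divDeg k res E + 1 ≤ t := by
  have := hC.rr_ineq E
  rw [hE, finrank_bot] at this
  push_cast at this
  linarith

theorem L_ne_bot_of_le_divDeg (hC : IsProjCurve k F res ord ev L t)
    (hE : (t : ℤ) ≤ divDeg k res E) : L E ≠ ⊥ :=
  fun hbot => by linarith [hC.divDeg_add_one_le_of_L_eq_bot hbot]

theorem ord_nonneg_of_mem (hC : IsProjCurve k F res ord ev L t) (hf : f ∈ L E) (hf0 : f ≠ 0)
    (hP : E P = 0) : 0 ≤ ord P f := by
  simpa [hP] using (hC.mem_L E f).1 hf hf0 P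

theorem mem_L_sub_single (hC : IsProjCurve k F res ord ev L t) (hf : f ∈ L E)
    (hP : f ≠ 0 → 1 ≤ E P + ord P f) : f ∈ L (E - Finsupp.single P 1) := by
  rw [hC.mem_L] at hf ⊢
  intro hf0 Q
  by_cases hQP : Q = P
  · subst hQP
    have := hP hf0
    simp only [Finsupp.coe_sub, Pi.sub_apply, Finsupp.single_eq_same]
    omega
  · simpa [Finsupp.single_apply, Ne.symm hQP] using hf hf0 Q

theorem ev_neg (hC : IsProjCurve k F res ord ev L t) (hf0 : f ≠ 0) (hf : 0 ≤ ord P f) :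
    ev P (-f) = -ev P f := by
  have hm1 : (-1 : F) = algebraMap k F (-1) := by simp
  have hord : ord P (-1 : F) = 0 := hm1 ▸ hC.ord_algebraMap P (-1) (by norm_num)
  rw [neg_eq_neg_one_mul, hC.ev_mul P _ f (by norm_num) hf0 hord.ge hf, hm1, hC.ev_algebraMap]
  simp

theorem ev_add_of_mem (hC : IsProjCurve k F res ord ev L t) (hP : E P = 0) {g : F}
    (hf : f ∈ L E) (hg : g ∈ L E) : ev P (f + g) = ev P f + ev P g := by
  rcases eq_or_ne f 0 with rfl | hf0
  · simp [hC.ev_zero]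
  rcases eq_or_ne g 0 with rfl | hg0
  · simp [hC.ev_zero]
  have hfP := hC.ord_nonneg_of_mem hf hf0 hP
  rcases eq_or_ne (f + g) 0 with hfg | hfg
  · rw [hfg, hC.ev_zero, eq_neg_of_add_eq_zero_right hfg, hC.ev_neg hf0 hfP, add_neg_cancel]
  · exact hC.ev_add P f g hf0 hg0 hfP (hC.ord_nonneg_of_mem hg hg0 hP)

theorem ev_smul_of_mem (hC : IsProjCurve k F res ord ev L t) (hP : E P = 0) (c : k)
    (hf : f ∈ L E) : ev P (c • f) = c • ev P f := by
  rcases eq_or_ne c 0 with rfl | hc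
  · simp [hC.ev_zero]
  rcases eq_or_ne f 0 with rfl | hf0
  · simp [hC.ev_zero]
  rw [Algebra.smul_def, hC.ev_mul P _ f ((FaithfulSMul.algebraMap_eq_zero_iff k F).not.2 hc) hf0
    (hC.ord_algebraMap P c hc).ge (hC.ord_nonneg_of_mem hf hf0 hP), hC.ev_algebraMap,
    ← Algebra.smul_def]

def evalOnL (hC : IsProjCurve k F res ord ev L t) (hP : E P = 0) : L E →ₗ[k] res P where
  toFun f := ev P f
  map_add' f g := hC.ev_add_of_mem hP f.2 g.2
  map_smul' c f := hC.ev_smul_of_mem hP c f.2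

theorem evalOnL_injective (hC : IsProjCurve k F res ord ev L t) (hP : E P = 0)
    (hE : L (E - Finsupp.single P 1) = ⊥) : Function.Injective (hC.evalOnL hP) := by
  rw [← LinearMap.ker_eq_bot, Submodule.eq_bot_iff]
  rintro ⟨f, hf⟩ hev
  have hfP : f ∈ L (E - Finsupp.single P 1) := hC.mem_L_sub_single hf fun hf0 => by
    have := (hC.ev_eq_zero_iff P f hf0 (hC.ord_nonneg_of_mem hf hf0 hP)).1 hev
    omega
  simpa [hE] using hfP

theorem exists_eq_ev_mul_inv_ev (hC : IsProjCurve k F res ord ev L t) (hP : E P = 0)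
    (hE : L (E - Finsupp.single P 1) = ⊥)
    (hdim : Module.finrank k (res P) < 2 * Module.finrank k (L E)) (ρ : (res P)ˣ) :
    ∃ v ∈ {u : (res P)ˣ | ∃ f ∈ L E, ev P f = u},
      ∃ w ∈ {u : (res P)ˣ | ∃ f ∈ L E, ev P f = u}, ρ = v * w⁻¹ := by
  have := hC.finiteDimensional_res P
  have := hC.finiteDimensional_L E
  have hV : Module.finrank k (res P) <
      2 * Module.finrank k (LinearMap.range (hC.evalOnL hP)) := by
    rwa [LinearMap.finrank_range_of_inj (hC.evalOnL_injective hP hE)]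
  obtain ⟨w, ⟨g, rfl⟩, hw0, ⟨f, hf⟩⟩ :=
    Submodule.exists_ne_zero_mul_mem_of_finrank_lt hV ρ.ne_zero
  refine ⟨Units.mk0 _ (mul_ne_zero ρ.ne_zero hw0), ⟨f, f.2, hf⟩,
    Units.mk0 _ hw0, ⟨g, g.2, rfl⟩, Units.ext ?_⟩
  simp

variable {D : Pt →₀ ℤ} {e n μ : ℤ} {h : F}

theorem ord_eq_one_of_level (hC : IsProjCurve k F res ord ev L t) (he : divDeg k res D = e)
    (he0 : 0 ≤ e) (hn : 2 * (t : ℤ) + e - 2 < n * e) (hμ : n ≤ μ) (hP : D P = 0)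
    (hμP : L (μ • D - Finsupp.single P 1) = ⊥) (hh : h ∈ L ((μ + 1) • D - Finsupp.single P 1))
    (hh0 : h ≠ 0) : ord P h = 1 := by
  have hpos : 1 ≤ ord P h := by simpa [hP] using (hC.mem_L _ h).1 hh hh0 P
  by_contra hne
  have h2 := hC.divDeg_nonneg_of_mem
    (hC.mem_L_sub_single (P := P) hh fun _ => by simp [hP]; omega) hh0
  have h1 := hC.divDeg_add_one_le_of_L_eq_bot hμP
  simp only [divDeg_sub, divDeg_zsmul, divDeg_single, he] at h1 h2
  nlinarith [mul_le_mul_of_nonneg_right hμ he0]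

theorem ord_eq_zero_of_level (hC : IsProjCurve k F res ord ev L t) (he : divDeg k res D = e)
    (hn : 2 * (t : ℤ) + e - 2 < n * e) (hμP : L (μ • D - Finsupp.single P 1) = ⊥)
    (hh : h ∈ L ((μ + 1) • D - Finsupp.single P 1)) (hh0 : h ≠ 0) {Q : Pt}
    (hQ : Q ∈ goodPoints L D n) (hQP : Q ≠ P) : ord Q h = 0 := by
  have hnonneg : 0 ≤ ord Q h := hC.ord_nonneg_of_mem hh hh0 (by simp [hQ.1, hQP])
  by_contra hne
  have h3 := hC.divDeg_nonneg_of_mem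
    (hC.mem_L_sub_single (P := Q) hh fun _ => by simp [hQ.1, hQP]; omega) hh0
  have h1 := hC.divDeg_add_one_le_of_L_eq_bot hμP
  have h2 := hC.divDeg_add_one_le_of_L_eq_bot hQ.2
  simp only [divDeg_sub, divDeg_zsmul, divDeg_single, he] at h1 h2 h3
  linarith

theorem finrank_lt_two_mul_finrank_of_level (hC : IsProjCurve k F res ord ev L t)
    (he : divDeg k res D = e) (he0 : 0 ≤ e) (hn : 2 * (t : ℤ) + e - 2 < n * e) (hμ : n ≤ μ)
    (hμP : L (μ • D - Finsupp.single P 1) = ⊥) (hh : h ∈ L ((μ + 1) • D - Finsupp.single P 1))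
    (hh0 : h ≠ 0) : Module.finrank k (res P) < 2 * Module.finrank k (L (μ • D)) := by
  have h1 := hC.divDeg_add_one_le_of_L_eq_bot hμP
  have h2 := hC.divDeg_nonneg_of_mem hh hh0
  have h3 := hC.rr_ineq (μ • D)
  simp only [divDeg_sub, divDeg_zsmul, divDeg_single, he] at h1 h2 h3
  have : (Module.finrank k (res P) : ℤ) < 2 * Module.finrank k (L (μ • D)) := by
    nlinarith [mul_le_mul_of_nonneg_right hμ he0]
  exact_mod_cast this

variable {m : ℕ} {bd : ∀ P, MilnorK (m + 1) F →+ MilnorK m (res P)}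

theorem milnorSymbol_mem_isolatedBoundaries_of_level (hC : IsProjCurve k F res ord ev L t)
    (hbd : ∀ P, IsMilnorBoundary (ord P) (ev P) (bd P)) (he : divDeg k res D = e)
    (he0 : 0 ≤ e) (hn : 2 * (t : ℤ) + e - 2 < n * e) (hμ : n ≤ μ) (hP : P ∈ goodPoints L D n)
    (hμP : L (μ • D - Finsupp.single P 1) = ⊥) (hh : h ∈ L ((μ + 1) • D - Finsupp.single P 1))
    (hh0 : h ≠ 0)
    (ih : ∀ Q ∈ goodPoints L D n, L (μ • D - Finsupp.single Q 1) ≠ ⊥ →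
      isolatedBoundaries bd (goodPoints L D n) Q = ⊤)
    {a : Fin m → (res P)ˣ} (ha : ∀ i, ∃ f ∈ L (μ • D), ev P f = a i) :
    milnorSymbol a ∈ isolatedBoundaries bd (goodPoints L D n) P := by
  have hμD (Q : Pt) (hQ : Q ∈ goodPoints L D n) : (μ • D) Q = 0 := by simp [hQ.1]
  choose f hf hfa using ha
  have hf0 (i : Fin m) : f i ≠ 0 := fun hfi => (a i).ne_zero (by rw [← hfa i, hfi, hC.ev_zero])
  have hfP (i : Fin m) : ord P (f i) = 0 := by
    have hnonneg := hC.ord_nonneg_of_mem (hf i) (hf0 i) (hμD P hP)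
    have := mt ((hC.ev_eq_zero_iff P (f i) (hf0 i) hnonneg).2) (hfa i ▸ (a i).ne_zero)
    omega
  set x := milnorSymbol (Fin.snoc (fun i => Units.mk0 (f i) (hf0 i)) (Units.mk0 h hh0))
  have hsupp (Q : Pt) (hQ : Q ∈ goodPoints L D n) (hQP : Q ≠ P) (hx : bd Q x ≠ 0) :
      ∃ i, ord Q (f i) ≠ 0 := by
    by_contra! hfQ
    refine hx ((hbd Q).1 _ fun j => ?_)
    induction j using Fin.lastCases with
    | last => simpa using hC.ord_eq_zero_of_level he hn hμP hh hh0 hQ hQP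
    | cast i => simpa using hfQ i
  rw [← (hbd P).2 (fun i => Units.mk0 (f i) (hf0 i)) (Units.mk0 h hh0)
    (hC.ord_eq_one_of_level he he0 hn hμ hP.1 hμP hh hh0) hfP a fun i => (hfa i).symm]
  refine boundary_mem_isolatedBoundaries hP x ?_ fun Q hQ hQP hx => ?_
  · refine (Set.finite_iUnion fun i => hC.support_finite (f i) (hf0 i)).subset ?_
    rintro Q ⟨hQ, hQP, hx⟩
    exact Set.mem_iUnion.2 (hsupp Q hQ hQP hx)
  · obtain ⟨i, hi⟩ := hsupp Q hQ hQP hx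
    have hfQ : f i ∈ L (μ • D - Finsupp.single Q 1) := hC.mem_L_sub_single (hf i) fun _ => by
      have := hC.ord_nonneg_of_mem (hf i) (hf0 i) (hμD Q hQ)
      rw [hμD Q hQ]
      omega
    rw [ih Q hQ fun hbot => hf0 i (by simpa [hbot] using hfQ)]
    exact AddSubgroup.mem_top _

theorem isolatedBoundaries_eq_top_of_level (hC : IsProjCurve k F res ord ev L t)
    (hbd : ∀ P, IsMilnorBoundary (ord P) (ev P) (bd P)) (he : divDeg k res D = e)
    (he0 : 0 ≤ e) (hn : 2 * (t : ℤ) + e - 2 < n * e) (hμ : n ≤ μ) (hP : P ∈ goodPoints L D n)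
    (hμP : L (μ • D - Finsupp.single P 1) = ⊥)
    (hμP' : L ((μ + 1) • D - Finsupp.single P 1) ≠ ⊥)
    (ih : ∀ Q ∈ goodPoints L D n, L (μ • D - Finsupp.single Q 1) ≠ ⊥ →
      isolatedBoundaries bd (goodPoints L D n) Q = ⊤) :
    isolatedBoundaries bd (goodPoints L D n) P = ⊤ := by
  obtain ⟨h, hh, hh0⟩ := (Submodule.ne_bot_iff _).1 hμP'
  rw [eq_top_iff, ← closure_milnorSymbol_eq_top (hC.exists_eq_ev_mul_inv_ev (by simp [hP.1]) hμP
    (hC.finrank_lt_two_mul_finrank_of_level he he0 hn hμ hμP hh hh0)), AddSubgroup.closure_le]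
  rintro _ ⟨a, ha, rfl⟩
  exact hC.milnorSymbol_mem_isolatedBoundaries_of_level hbd he he0 hn hμ hP hμP hh hh0 ih
    fun i => ha i (Set.mem_univ i)

theorem isolatedBoundaries_eq_top (hC : IsProjCurve k F res ord ev L t)
    (hbd : ∀ P, IsMilnorBoundary (ord P) (ev P) (bd P)) (he : divDeg k res D = e) (he1 : 1 ≤ e)
    (hn : 2 * (t : ℤ) + e - 2 < n * e) :
    ∀ P ∈ goodPoints L D n, isolatedBoundaries bd (goodPoints L D n) P = ⊤ := by
  have hlevel (r : ℕ) : ∀ P ∈ goodPoints L D n, L ((n + r) • D - Finsupp.single P 1) ≠ ⊥ →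
      isolatedBoundaries bd (goodPoints L D n) P = ⊤ := by
    induction r with
    | zero => exact fun P hP hne => absurd (by simpa using hP.2) hne
    | succ r ih =>
      intro P hP hne
      by_cases hr : L ((n + r) • D - Finsupp.single P 1) = ⊥
      · refine hC.isolatedBoundaries_eq_top_of_level hbd he (by omega) hn (by omega) hP hr ?_ ih
        simpa [add_assoc] using hne
      · exact ih P hP hr
  intro P hP
  have hn0 : 0 ≤ n := by
    by_contra hneg
    nlinarith
  refine hlevel (Module.finrank k (res P) + t) P hP (hC.L_ne_bot_of_le_divDeg ?_)
  simp only [divDeg_sub, divDeg_zsmul, divDeg_single, he]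
  push_cast
  nlinarith

end IsProjCurve

theorem statement1_general (k F : Type) [Field k] [Field F] [Algebra k F]
    {Pt : Type} (res : Pt → Type) [∀ P, Field (res P)] [∀ P, Algebra k (res P)]
    (ord : Pt → F → ℤ) (ev : ∀ P, F → res P)
    (L : (Pt →₀ ℤ) → Submodule k F) (t : ℕ)
    (hC : IsProjCurve k F res ord ev L t)
    (D : Pt →₀ ℤ) (e : ℤ) (he : divDeg k res D = e) (he1 : 1 ≤ e)
    (n : ℤ) (hn : 2 * (t : ℤ) + e - 2 < n * e)
    (Stilde : Set Pt)
    (hSt : Stilde = {P | D P ≠ 0} ∪ {P | L (n • D - Finsupp.single P 1) ≠ ⊥})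
    (m : ℕ)
    (bd : ∀ P : Pt, MilnorK (m + 1) F →+ MilnorK m (res P))
    (hbd : ∀ P, IsMilnorBoundary (ord P) (ev P) (bd P)) :
    ∀ y : Π₀ P : Pt, MilnorK m (res P),
      ∃ x : MilnorK (m + 1) F, ∀ P ∉ Stilde, bd P x = y P := by
  intro y
  obtain ⟨x, hx⟩ := exists_boundary_eq_of_isolatedBoundaries_eq_top
    (hC.isolatedBoundaries_eq_top hbd he he1 hn) y
  refine ⟨x, fun P hP => hx P ?_⟩
  show D P = 0 ∧ _
  simpa [hSt, not_or] using hP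

/-- Remark after Proposition `introcoker`.  With `C`, `D`, `e`, `n`
and `S̃` as in Statement 0, for every `n' = m + 1 ≥ 3` the map
`K^M_{n'}(F) → ∐_{P ∉ S̃} K^M_{n'-1}(k(P))` induced by the tame symbols on Milnor
K-theory is surjective. -/
theorem statement1 (k F : Type) [Field k] [Field F] [Algebra k F]
    {Pt : Type} (res : Pt → Type) [∀ P, Field (res P)] [∀ P, Algebra k (res P)]
    (ord : Pt → F → ℤ) (ev : ∀ P, F → res P)
    (L : (Pt →₀ ℤ) → Submodule k F) (t : ℕ)
    (hC : IsProjCurve k F res ord ev L t)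
    (D : Pt →₀ ℤ) (e : ℤ) (he : divDeg k res D = e) (he1 : 1 ≤ e)
    (n : ℤ) (hn : 2 * (t : ℤ) + e - 2 < n * e)
    (hnmin : ∀ m : ℤ, 2 * (t : ℤ) + e - 2 < m * e → n ≤ m)
    (Stilde : Set Pt)
    (hSt : Stilde = {P | D P ≠ 0} ∪ {P | L (n • D - Finsupp.single P 1) ≠ ⊥})
    (m : ℕ) (hm : 2 ≤ m)
    (bd : ∀ P : Pt, MilnorK (m + 1) F →+ MilnorK m (res P))
    (hbd : ∀ P, IsMilnorBoundary (ord P) (ev P) (bd P)) :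
    ∀ y : Π₀ P : Pt, MilnorK m (res P),
      ∃ x : MilnorK (m + 1) F, ∀ P ∉ Stilde, bd P x = y P :=
  statement1_general k F res ord ev L t hC D e he he1 n hn Stilde hSt m bd hbd

end
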